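/- Let s₁, s₂ ∈ ℝ^L with d := ‖s₁ − s₂‖ > 0, let σ₀ > 0, let μ_s denote the Gaussian probability measure on ℝ^L with mean s and covariance σ₀² I_L (the product of L one-dimensional Gaussians N(s_i, σ₀²)), and let π₁, π₂ > 0 with π₁ + π₂ = 1. Then for every measurable decision rule D : ℝ^L → {1,2}, the Bayes error probability satisfies π₁·μ_{s₁}({y : D(y) = 2}) + π₂·μ_{s₂}({y : D(y) = 1}) ≥ π₁·Q(d/(2σ₀) + (σ₀/d)·ln(π₁/π₂)) + π₂·Q(d/(2σ₀) − (σ₀/d)·ln(π₁/π₂)). -/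

import Mathlib

/-!
With `ρ = dμ_{s₂}/dμ_{s₁}`, the error of a rule that decides `s₂` on `A` is
`∫ (π₁ 1_A + π₂ ρ 1_{Aᶜ}) dμ_{s₁} ≥ ∫ min(π₁, π₂ ρ) dμ_{s₁}`, with equality for the MAP region
`A = {π₁ ≤ π₂ ρ}`. For Gaussian noise `ρ(y) = exp(-T(y)/σ₀²)`, where
`T(y) = ⟨s₁ - s₂, y - (s₁ + s₂)/2⟩` is the matched filter, so the MAP region is a half-space
`{T ≤ -σ₀² ln(π₁/π₂)}`. Under `μ_{sⱼ}` the statistic `T` is Gaussian with mean `±d²/2` and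
variance `d²σ₀²`, and its two tail probabilities are the two `Q`-terms.
-/

open MeasureTheory ProbabilityTheory

/-- The standard normal tail function `Q(x) = (2π)^{-1/2} ∫_x^∞ e^{-t²/2} dt`. -/
noncomputable def Qfun (x : ℝ) : ℝ :=
  (Real.sqrt (2 * Real.pi))⁻¹ * ∫ t in Set.Ioi x, Real.exp (-t ^ 2 / 2)

/-- The Gaussian measure on `ℝ^L` with mean `s` and covariance `σ₀² I_L`
(the product of the one-dimensional Gaussians `N(s i, σ₀²)`). -/
noncomputable def gaussianVec {L : ℕ} (s : Fin L → ℝ) (σ₀ : ℝ) : Measure (Fin L → ℝ) :=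
  Measure.pi fun i => gaussianReal (s i) ⟨σ₀ ^ 2, sq_nonneg σ₀⟩

open Set
open scoped NNReal ENNReal

section BayesTest

variable {α : Type*} [MeasurableSpace α] {μ ν : Measure α} {A : Set α}

lemma mul_measure_add_mul_withDensity_compl {ρ : α → ℝ≥0∞} (hρ : Measurable ρ)
    (hA : MeasurableSet A) (p₁ p₂ : ℝ≥0∞) :
    p₁ * μ A + p₂ * μ.withDensity ρ Aᶜ
      = ∫⁻ y, A.indicator (fun _ ↦ p₁) y + Aᶜ.indicator (fun y ↦ p₂ * ρ y) y ∂μ := by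
  rw [lintegral_add_left (measurable_const.indicator hA), lintegral_indicator hA,
    lintegral_indicator hA.compl, setLIntegral_const, withDensity_apply _ hA.compl,
    lintegral_const_mul _ hρ]

/-- Pointwise, the integrand of the left side is `min p₁ (p₂ * ρ)`. -/
lemma mul_measure_add_mul_withDensity_compl_le {ρ : α → ℝ≥0∞} (hρ : Measurable ρ)
    (hA : MeasurableSet A) (p₁ p₂ : ℝ≥0∞) :
    p₁ * μ {y | p₁ ≤ p₂ * ρ y} + p₂ * μ.withDensity ρ {y | p₁ ≤ p₂ * ρ y}ᶜ
      ≤ p₁ * μ A + p₂ * μ.withDensity ρ Aᶜ := by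
  have hB : MeasurableSet {y | p₁ ≤ p₂ * ρ y} :=
    measurableSet_le measurable_const (hρ.const_mul p₂)
  rw [mul_measure_add_mul_withDensity_compl hρ hA, mul_measure_add_mul_withDensity_compl hρ hB]
  refine lintegral_mono fun y ↦ ?_
  by_cases h : p₁ ≤ p₂ * ρ y
  · by_cases hy : y ∈ A <;> simp [h, hy]
  · by_cases hy : y ∈ A <;> simp [h, hy, (not_le.1 h).le]

lemma mul_measureReal_add_mul_measureReal_compl_le [IsFiniteMeasure μ] [IsFiniteMeasure ν]
    {ρ : α → ℝ} (hν : ν = μ.withDensity fun y ↦ ENNReal.ofReal (ρ y)) (hρ : Measurable ρ)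
    (hA : MeasurableSet A) {p₁ p₂ : ℝ} (hp₁ : 0 < p₁) (hp₂ : 0 ≤ p₂) :
    p₁ * μ.real {y | p₁ ≤ p₂ * ρ y} + p₂ * ν.real {y | p₁ ≤ p₂ * ρ y}ᶜ
      ≤ p₁ * μ.real A + p₂ * ν.real Aᶜ := by
  have hB : {y | ENNReal.ofReal p₁ ≤ ENNReal.ofReal p₂ * ENNReal.ofReal (ρ y)}
      = {y | p₁ ≤ p₂ * ρ y} := by
    ext y
    simp [← ENNReal.ofReal_mul hp₂, ENNReal.ofReal_le_ofReal_iff', hp₁.not_ge]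
  have h := mul_measure_add_mul_withDensity_compl_le (μ := μ)
    (ρ := fun y ↦ ENNReal.ofReal (ρ y)) (by fun_prop) hA (ENNReal.ofReal p₁) (ENNReal.ofReal p₂)
  rw [hB, ← hν] at h
  have := ENNReal.toReal_mono (by finiteness) h
  rwa [ENNReal.toReal_add (by finiteness) (by finiteness),
    ENNReal.toReal_add (by finiteness) (by finiteness), ENNReal.toReal_mul, ENNReal.toReal_mul,
    ENNReal.toReal_mul, ENNReal.toReal_mul, ENNReal.toReal_ofReal hp₁.le,
    ENNReal.toReal_ofReal hp₂] at this

end BayesTest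

lemma MeasureTheory.Measure.pi_withDensity {ι : Type*} [Fintype ι] {α : ι → Type*}
    [∀ i, MeasurableSpace (α i)] (μ : ∀ i, Measure (α i)) [∀ i, IsProbabilityMeasure (μ i)]
    {f : ∀ i, α i → ℝ≥0∞} (hf : ∀ i, Measurable (f i))
    [∀ i, SigmaFinite ((μ i).withDensity (f i))] :
    Measure.pi (fun i ↦ (μ i).withDensity (f i))
      = (Measure.pi μ).withDensity fun x ↦ ∏ i, f i (x i) := by
  refine Measure.pi_eq fun s hs ↦ ?_
  have hmeas (i : ι) : Measurable ((s i).indicator (f i)) := (hf i).indicator (hs i)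
  have hprod : (univ.pi s).indicator (fun x ↦ ∏ i, f i (x i))
      = fun x ↦ ∏ i, (s i).indicator (f i) (x i) := by
    ext x
    by_cases hx : x ∈ univ.pi s
    · simp_all [indicator_of_mem]
    · obtain ⟨i, -, hi⟩ := not_forall₂.1 hx
      rw [indicator_of_notMem hx,
        Finset.prod_eq_zero (Finset.mem_univ i) (indicator_of_notMem hi _)]
  rw [withDensity_apply _ (.univ_pi hs), ← lintegral_indicator (.univ_pi hs), hprod,
    lintegral_prod_eq_prod_lintegral_of_indepFun _ _ (iIndepFun_pi fun i ↦ (hmeas i).aemeasurable)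
      fun i ↦ (hmeas i).comp (measurable_pi_apply i)]
  refine Finset.prod_congr rfl fun i _ ↦ ?_
  rw [withDensity_apply _ (hs i), ← lintegral_indicator (hs i)]
  exact (measurePreserving_eval μ i).lintegral_comp (hmeas i)

lemma map_pi_gaussianReal_sum_mul {ι : Type*} [Fintype ι] (c m : ι → ℝ) (v : ι → ℝ≥0) :
    (Measure.pi fun i ↦ gaussianReal (m i) (v i)).map (fun y ↦ ∑ i, c i * y i)
      = gaussianReal (∑ i, c i * m i) (∑ i, ‖c i‖₊ ^ 2 * v i) := by
  refine Measure.ext_of_charFun (funext fun t ↦ ?_)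
  have hfactor (y : ι → ℝ) :
      Complex.exp (t * ↑(∑ i, c i * y i) * Complex.I)
        = ∏ i, Complex.exp (↑(t * c i) * y i * Complex.I) := by
    rw [← Complex.exp_sum]
    push_cast
    rw [Finset.mul_sum, Finset.sum_mul]
    exact congrArg Complex.exp (Finset.sum_congr rfl fun i _ ↦ by ring)
  rw [charFun_apply_real,
    integral_map (Finset.measurable_sum _ fun i _ ↦ by fun_prop).aemeasurable (by fun_prop)]
  simp_rw [hfactor]
  rw [integral_fintype_prod_eq_prod fun i (x : ℝ) ↦ Complex.exp (↑(t * c i) * x * Complex.I)]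
  simp_rw [← charFun_apply_real, charFun_gaussianReal, ← Complex.exp_sum]
  congr 1
  push_cast
  simp only [Finset.mul_sum, Finset.sum_mul, ← Finset.sum_sub_distrib, Finset.sum_div]
  refine Finset.sum_congr rfl fun i _ ↦ ?_
  rw [Real.norm_eq_abs, ← Complex.ofReal_pow, sq_abs]
  push_cast
  ring

section Gaussian

variable {v : ℝ≥0}

lemma gaussianReal_eq_withDensity (a b : ℝ) (hv : v ≠ 0) :
    gaussianReal b v = (gaussianReal a v).withDensity
      fun x ↦ ENNReal.ofReal (Real.exp (-((a - b) * (x - (a + b) / 2)) / v)) := by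
  rw [gaussianReal_of_var_ne_zero _ hv, gaussianReal_of_var_ne_zero _ hv,
    ← withDensity_mul _ (measurable_gaussianPDF a v) (by fun_prop)]
  congr 1
  funext x
  rw [Pi.mul_apply, gaussianPDF, gaussianPDF, ← ENNReal.ofReal_mul (gaussianPDFReal_nonneg a v x),
    gaussianPDFReal, gaussianPDFReal, mul_assoc _ (Real.exp _), ← Real.exp_add]
  congr 3
  field_simp
  ring

lemma pi_gaussianReal_eq_withDensity {ι : Type*} [Fintype ι] (a b : ι → ℝ) (hv : v ≠ 0) :
    Measure.pi (fun i ↦ gaussianReal (b i) v)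
      = (Measure.pi fun i ↦ gaussianReal (a i) v).withDensity
        fun y ↦ ENNReal.ofReal (Real.exp (-(∑ i, (a i - b i) * (y i - (a i + b i) / 2)) / v)) := by
  have hfac (i : ι) := gaussianReal_eq_withDensity (a i) (b i) hv
  have : ∀ i, SigmaFinite ((gaussianReal (a i) v).withDensity fun x ↦
      ENNReal.ofReal (Real.exp (-((a i - b i) * (x - (a i + b i) / 2)) / v))) := fun i ↦ by
    rw [← hfac]; infer_instance
  simp_rw [hfac]
  rw [Measure.pi_withDensity _ fun i ↦ by fun_prop]
  congr 1
  funext y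
  rw [← ENNReal.ofReal_prod_of_nonneg fun i _ ↦ (Real.exp_pos _).le, ← Real.exp_sum,
    ← Finset.sum_div, Finset.sum_neg_distrib]

lemma Qfun_nonneg (x : ℝ) : 0 ≤ Qfun x :=
  mul_nonneg (by positivity) (setIntegral_nonneg measurableSet_Ioi fun t _ ↦ by positivity)

lemma gaussianReal_zero_one_Ioi (x : ℝ) : gaussianReal 0 1 (Ioi x) = ENNReal.ofReal (Qfun x) := by
  rw [gaussianReal_apply_eq_integral _ one_ne_zero, Qfun, ← integral_const_mul]
  congr 1
  refine setIntegral_congr_fun measurableSet_Ioi fun t _ ↦ ?_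
  simp [gaussianPDFReal]

lemma gaussianReal_zero_real_Ioi (hv : v ≠ 0) (z : ℝ) :
    (gaussianReal 0 v).real (Ioi z) = Qfun (z / √v) := by
  have hsqrt : 0 < √(v : ℝ) := Real.sqrt_pos.2 (NNReal.coe_pos.2 (pos_iff_ne_zero.2 hv))
  have hscale : (gaussianReal 0 1).map (√(v : ℝ) * ·) = gaussianReal 0 v := by
    rw [gaussianReal_map_const_mul, mul_zero, mul_one]
    congr
    exact Real.sq_sqrt v.2
  rw [← hscale, map_measureReal_apply (by fun_prop) measurableSet_Ioi,
    preimage_const_mul_Ioi₀ _ hsqrt, measureReal_def, gaussianReal_zero_one_Ioi,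
    ENNReal.toReal_ofReal (Qfun_nonneg _)]

lemma gaussianReal_real_Ioi (m : ℝ) (hv : v ≠ 0) (x : ℝ) :
    (gaussianReal m v).real (Ioi x) = Qfun ((x - m) / √v) := by
  rw [← gaussianReal_zero_real_Ioi hv, ← sub_self m, ← gaussianReal_map_sub_const,
    map_measureReal_apply (by fun_prop) measurableSet_Ioi, preimage_sub_const_Ioi, sub_add_cancel]

lemma gaussianReal_real_Iic (m : ℝ) (hv : v ≠ 0) (x : ℝ) :
    (gaussianReal m v).real (Iic x) = Qfun ((m - x) / √v) := by
  have hx : gaussianReal m v {x} = 0 :=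
    gaussianReal_absolutelyContinuous m hv Real.volume_singleton
  rw [measureReal_congr (Iio_ae_eq_Iic' hx).symm, ← gaussianReal_zero_real_Ioi hv, ← sub_self m,
    ← gaussianReal_map_const_sub, map_measureReal_apply (by fun_prop) measurableSet_Ioi,
    preimage_const_sub_Ioi, sub_sub_cancel]

end Gaussian

lemma Real.sqrt_toNNReal_mul_sq {a σ : ℝ} (ha : 0 ≤ a) (hσ : 0 ≤ σ) :
    √((a * σ ^ 2).toNNReal : ℝ) = √a * σ := by
  rw [Real.coe_toNNReal _ (by positivity), Real.sqrt_mul ha, Real.sqrt_sq hσ]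

section MatchedFilter

variable {L : ℕ}

-- The variance in `gaussianVec` is an anonymous-constructor term that `rw` cannot match.
lemma gaussianVec_eq_pi (s : Fin L → ℝ) (σ₀ : ℝ) :
    gaussianVec s σ₀ = Measure.pi fun i ↦ gaussianReal (s i) (σ₀ ^ 2).toNNReal := by
  rw [Real.toNNReal_of_nonneg (sq_nonneg σ₀)]
  rfl

instance (s : Fin L → ℝ) (σ₀ : ℝ) : IsProbabilityMeasure (gaussianVec s σ₀) := by
  rw [gaussianVec_eq_pi]
  infer_instance

noncomputable def matchedFilter (s₁ s₂ y : Fin L → ℝ) : ℝ :=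
  ∑ i, (s₁ i - s₂ i) * (y i - (s₁ i + s₂ i) / 2)

@[fun_prop]
lemma measurable_matchedFilter (s₁ s₂ : Fin L → ℝ) : Measurable (matchedFilter s₁ s₂) :=
  Finset.measurable_sum _ fun i _ ↦ by fun_prop

lemma matchedFilter_left (s₁ s₂ : Fin L → ℝ) :
    matchedFilter s₁ s₂ s₁ = (∑ i, (s₁ i - s₂ i) ^ 2) / 2 := by
  rw [matchedFilter, Finset.sum_div]
  exact Finset.sum_congr rfl fun i _ ↦ by ring

lemma matchedFilter_right (s₁ s₂ : Fin L → ℝ) :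
    matchedFilter s₁ s₂ s₂ = -((∑ i, (s₁ i - s₂ i) ^ 2) / 2) := by
  rw [matchedFilter, Finset.sum_div, ← Finset.sum_neg_distrib]
  exact Finset.sum_congr rfl fun i _ ↦ by ring

lemma gaussianVec_eq_withDensity_matchedFilter (s₁ s₂ : Fin L → ℝ) {σ₀ : ℝ} (hσ : σ₀ ≠ 0) :
    gaussianVec s₂ σ₀ = (gaussianVec s₁ σ₀).withDensity
      fun y ↦ ENNReal.ofReal (Real.exp (-matchedFilter s₁ s₂ y / σ₀ ^ 2)) := by
  rw [gaussianVec_eq_pi, gaussianVec_eq_pi,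
    pi_gaussianReal_eq_withDensity s₁ s₂ (by simpa using hσ)]
  simp [matchedFilter, Real.coe_toNNReal _ (sq_nonneg σ₀)]

lemma map_gaussianVec_matchedFilter (s₁ s₂ s : Fin L → ℝ) (σ₀ : ℝ) :
    (gaussianVec s σ₀).map (matchedFilter s₁ s₂)
      = gaussianReal (matchedFilter s₁ s₂ s) ((∑ i, (s₁ i - s₂ i) ^ 2) * σ₀ ^ 2).toNNReal := by
  have hsplit : matchedFilter s₁ s₂ = (· - ∑ i, (s₁ i - s₂ i) * ((s₁ i + s₂ i) / 2)) ∘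
      fun y ↦ ∑ i, (s₁ i - s₂ i) * y i := by
    ext y
    simp [matchedFilter, mul_sub, Finset.sum_sub_distrib]
  rw [gaussianVec_eq_pi, hsplit,
    ← Measure.map_map (by fun_prop) (Finset.measurable_sum _ fun i _ ↦ by fun_prop),
    map_pi_gaussianReal_sum_mul, gaussianReal_map_sub_const]
  have hvar : 0 ≤ (∑ i, (s₁ i - s₂ i) ^ 2) * σ₀ ^ 2 := by positivity
  congr 1
  rw [← NNReal.coe_inj, Real.coe_toNNReal _ hvar, Finset.sum_mul]
  simp only [NNReal.coe_sum, NNReal.coe_mul, NNReal.coe_pow, coe_nnnorm, Real.norm_eq_abs, sq_abs,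
    Real.coe_toNNReal _ (sq_nonneg σ₀)]

lemma gaussianVec_real_matchedFilter_Iic (s₁ s₂ : Fin L → ℝ) {σ₀ : ℝ} (hσ : 0 < σ₀)
    (hS : 0 < ∑ i, (s₁ i - s₂ i) ^ 2) (θ : ℝ) :
    (gaussianVec s₁ σ₀).real (matchedFilter s₁ s₂ ⁻¹' Iic θ)
      = Qfun (√(∑ i, (s₁ i - s₂ i) ^ 2) / (2 * σ₀) - θ / (√(∑ i, (s₁ i - s₂ i) ^ 2) * σ₀)) := by
  rw [← map_measureReal_apply (measurable_matchedFilter _ _) measurableSet_Iic,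
    map_gaussianVec_matchedFilter,
    gaussianReal_real_Iic _ (Real.toNNReal_pos.2 (by positivity)).ne',
    matchedFilter_left, Real.sqrt_toNNReal_mul_sq hS.le hσ.le]
  generalize ∑ i, (s₁ i - s₂ i) ^ 2 = S at hS ⊢
  have := Real.sq_sqrt hS.le
  congr 1
  field_simp
  linear_combination -this

lemma gaussianVec_real_matchedFilter_Ioi (s₁ s₂ : Fin L → ℝ) {σ₀ : ℝ} (hσ : 0 < σ₀)
    (hS : 0 < ∑ i, (s₁ i - s₂ i) ^ 2) (θ : ℝ) :
    (gaussianVec s₂ σ₀).real (matchedFilter s₁ s₂ ⁻¹' Ioi θ)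
      = Qfun (√(∑ i, (s₁ i - s₂ i) ^ 2) / (2 * σ₀) + θ / (√(∑ i, (s₁ i - s₂ i) ^ 2) * σ₀)) := by
  rw [← map_measureReal_apply (measurable_matchedFilter _ _) measurableSet_Ioi,
    map_gaussianVec_matchedFilter,
    gaussianReal_real_Ioi _ (Real.toNNReal_pos.2 (by positivity)).ne',
    matchedFilter_right, Real.sqrt_toNNReal_mul_sq hS.le hσ.le]
  generalize ∑ i, (s₁ i - s₂ i) ^ 2 = S at hS ⊢
  have := Real.sq_sqrt hS.le
  congr 1
  field_simp
  linear_combination -this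

end MatchedFilter

theorem stmt4_general {L : ℕ} (s₁ s₂ : Fin L → ℝ) (σ₀ : ℝ) (hσ : 0 < σ₀)
    (hd : 0 < Real.sqrt (∑ i, (s₁ i - s₂ i) ^ 2))
    (π₁ π₂ : ℝ) (hπ₁ : 0 < π₁) (hπ₂ : 0 < π₂)
    (D : (Fin L → ℝ) → Fin 2) (hD : Measurable D) :
    π₁ * Qfun (Real.sqrt (∑ i, (s₁ i - s₂ i) ^ 2) / (2 * σ₀) +
        σ₀ / Real.sqrt (∑ i, (s₁ i - s₂ i) ^ 2) * Real.log (π₁ / π₂)) +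
      π₂ * Qfun (Real.sqrt (∑ i, (s₁ i - s₂ i) ^ 2) / (2 * σ₀) -
        σ₀ / Real.sqrt (∑ i, (s₁ i - s₂ i) ^ 2) * Real.log (π₁ / π₂)) ≤
    π₁ * (gaussianVec s₁ σ₀ {y | D y = 1}).toReal +
      π₂ * (gaussianVec s₂ σ₀ {y | D y = 0}).toReal := by
  have hS : 0 < ∑ i, (s₁ i - s₂ i) ^ 2 := Real.sqrt_pos.1 hd
  have hMAP : {y | π₁ ≤ π₂ * Real.exp (-matchedFilter s₁ s₂ y / σ₀ ^ 2)}
      = matchedFilter s₁ s₂ ⁻¹' Iic (-(σ₀ ^ 2 * Real.log (π₁ / π₂))) := by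
    ext y
    rw [mem_ofPred_eq, ← div_le_iff₀' hπ₂, ← Real.log_le_iff_le_exp (by positivity),
      le_div_iff₀ (by positivity), mem_preimage, mem_Iic]
    constructor <;> intro h <;> linarith
  have hrule : {y | D y = 0} = {y | D y = 1}ᶜ := by
    ext y
    simp only [mem_ofPred_eq, mem_compl_iff, Fin.ext_iff]
    omega
  have key := mul_measureReal_add_mul_measureReal_compl_le (A := {y | D y = 1})
    (gaussianVec_eq_withDensity_matchedFilter s₁ s₂ hσ.ne') (by fun_prop)
    (hD (measurableSet_singleton 1)) hπ₁ hπ₂.le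
  rw [hMAP, ← preimage_compl, compl_Iic, gaussianVec_real_matchedFilter_Iic s₁ s₂ hσ hS,
    gaussianVec_real_matchedFilter_Ioi s₁ s₂ hσ hS, ← hrule] at key
  rw [← measureReal_def, ← measureReal_def]
  convert key using 4 <;> field_simp <;> ring

/-- Optimality of the MAP detector for binary hypothesis testing of two known signals in
AWGN: every measurable decision rule `D : ℝ^L → {1,2}` (here `Fin 2`, with `D y = 0`
meaning "decide s₁" and `D y = 1` meaning "decide s₂") has Bayes error probability at least
`π₁ Q(d/(2σ₀) + (σ₀/d) ln(π₁/π₂)) + π₂ Q(d/(2σ₀) − (σ₀/d) ln(π₁/π₂))`. -/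
theorem stmt4 {L : ℕ} (s₁ s₂ : Fin L → ℝ) (σ₀ : ℝ) (hσ : 0 < σ₀)
    (hd : 0 < Real.sqrt (∑ i, (s₁ i - s₂ i) ^ 2))
    (π₁ π₂ : ℝ) (hπ₁ : 0 < π₁) (hπ₂ : 0 < π₂) (hsum : π₁ + π₂ = 1)
    (D : (Fin L → ℝ) → Fin 2) (hD : Measurable D) :
    π₁ * Qfun (Real.sqrt (∑ i, (s₁ i - s₂ i) ^ 2) / (2 * σ₀) +
        σ₀ / Real.sqrt (∑ i, (s₁ i - s₂ i) ^ 2) * Real.log (π₁ / π₂)) +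
      π₂ * Qfun (Real.sqrt (∑ i, (s₁ i - s₂ i) ^ 2) / (2 * σ₀) -
        σ₀ / Real.sqrt (∑ i, (s₁ i - s₂ i) ^ 2) * Real.log (π₁ / π₂)) ≤
    π₁ * (gaussianVec s₁ σ₀ {y | D y = 1}).toReal +
      π₂ * (gaussianVec s₂ σ₀ {y | D y = 0}).toReal :=
  stmt4_general s₁ s₂ σ₀ hσ hd π₁ π₂ hπ₁ hπ₂ D hD
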